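/- arXiv:2303.09365 — 2 statements merged into one kernel-verified Lean document; each statement's English description precedes it below -/
import Mathlib

section
/- If G is a bipartite graph and k ≥ 2 is an integer, then Kc(G, k) = 1; that is, any two proper k-colorings of G are Kempe-k-equivalent. -/
open SimpleGraph

/-- The spanning subgraph of `G` consisting of the edges both of whose endpoints
receive color `i` or color `j` under `φ`. -/
def kempeSubgraph {V : Type*} (G : SimpleGraph V) {k : ℕ} (φ : V → Fin k) (i j : Fin k) :
    SimpleGraph V where
  Adj u v := G.Adj u v ∧ (φ u = i ∨ φ u = j) ∧ (φ v = i ∨ φ v = j)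
  symm := ⟨fun u v ⟨h, hu, hv⟩ => ⟨h.symm, hv, hu⟩⟩
  loopless := ⟨fun v h => G.irrefl h.1⟩

/-- `ψ` is obtained from `φ` by a single `i,j`-Kempe swap:  the colors `i` and `j` are
interchanged on the connected component (of the subgraph induced by colors `i,j`)
containing `w`, and nothing else changes. -/
def IsKempeSwap {V : Type*} (G : SimpleGraph V) {k : ℕ}
    (φ ψ : G.Coloring (Fin k)) : Prop :=
  ∃ (i j : Fin k) (w : V), ∀ v : V,
    ((kempeSubgraph G (fun x => φ x) i j).Reachable w v → ψ v = Equiv.swap i j (φ v)) ∧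
    (¬ (kempeSubgraph G (fun x => φ x) i j).Reachable w v → ψ v = φ v)

/-- Kempe `k`-equivalence of proper `k`-colorings:  one can be transformed into the
other by a sequence of Kempe swaps. -/
def KempeEquiv {V : Type*} (G : SimpleGraph V) (k : ℕ)
    (φ ψ : G.Coloring (Fin k)) : Prop :=
  Relation.EqvGen (IsKempeSwap G) φ ψ

/-- `Kc G k` is the number of Kempe equivalence classes of proper `k`-colorings of `G`. -/
noncomputable def Kc {V : Type*} (G : SimpleGraph V) (k : ℕ) : ℕ :=
  Nat.card (Quot (KempeEquiv G k))

/-- `G` can be obtained from a bipartite graph by adding `ℓ` edges. -/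
def BipartitePlus {V : Type*} (G : SimpleGraph V) (ℓ : ℕ) : Prop :=
  ∃ E : Finset (Sym2 V), E.card = ℓ ∧ ↑E ⊆ G.edgeSet ∧
    (G.deleteEdges ↑E).Colorable 2

/-!
Fix a proper 2-coloring `c` of the bipartite graph and let `β` be `c` read as a `k`-coloring.
Given a `k`-coloring `φ ≠ β`, pick `v` with `φ v ≠ β v` and swap the colors `φ v` and `β v` on the
Kempe chain through `v`. Along that chain the colors alternate in step with the sides of the
bipartition, so every vertex of the chain disagreed with `β` before the swap, and `v` agrees with
`β` after it. Hence the set of vertices where the coloring disagrees with `β` shrinks strictly, and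
finitely many swaps lead from `φ` to `β`.
-/

theorem Equiv.swap_apply_ne_of_not_and {α : Type*} [DecidableEq α] {i j a b : α} (hab : a ≠ b)
    (h : ¬((a = i ∨ a = j) ∧ (b = i ∨ b = j))) : Equiv.swap i j a ≠ b := by
  by_cases ha : a = i ∨ a = j
  · push Not at h
    obtain ⟨hbi, hbj⟩ := h ha
    rwa [Ne, Equiv.swap_apply_eq_iff, Equiv.swap_apply_of_ne_of_ne hbi hbj]
  · push Not at ha
    rwa [Equiv.swap_apply_of_ne_of_ne ha.1 ha.2]

namespace SimpleGraph

variable {V : Type*} {G : SimpleGraph V} {k : ℕ}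

open Classical in
noncomputable def Coloring.kempeSwap (φ : G.Coloring (Fin k)) (i j : Fin k) (w : V) :
    G.Coloring (Fin k) :=
  Coloring.mk (fun v => if (kempeSubgraph G φ i j).Reachable w v then Equiv.swap i j (φ v) else φ v)
    fun {u v} huv => by
      have hφ := φ.valid huv
      split_ifs with hu hv hv
      · exact (Equiv.injective _).ne hφ
      · exact Equiv.swap_apply_ne_of_not_and hφ fun h => hv (hu.trans (Adj.reachable ⟨huv, h⟩))
      · exact (Equiv.swap_apply_ne_of_not_and hφ.symm
          fun h => hu (hv.trans (Adj.reachable ⟨huv.symm, h⟩))).symm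
      · exact hφ

open Classical in
@[simp]
theorem Coloring.kempeSwap_apply (φ : G.Coloring (Fin k)) (i j : Fin k) (w v : V) :
    φ.kempeSwap i j w v =
      if (kempeSubgraph G φ i j).Reachable w v then Equiv.swap i j (φ v) else φ v :=
  rfl

theorem isKempeSwap_kempeSwap (φ : G.Coloring (Fin k)) (i j : Fin k) (w : V) :
    IsKempeSwap G φ (φ.kempeSwap i j w) :=
  ⟨i, j, w, fun _ => ⟨fun h => if_pos h, fun h => if_neg h⟩⟩

theorem kempeSubgraph_reachable_apply_eq_ite (c : G.Coloring (Fin 2)) (φ : G.Coloring (Fin k))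
    {i j : Fin k} {v u : V} (hv : φ v = i) (h : (kempeSubgraph G φ i j).Reachable v u) :
    φ u = if c u = c v then i else j := by
  rw [reachable_iff_reflTransGen] at h
  induction h with
  | refl => simp [hv]
  | tail _ hxy ih =>
    obtain ⟨hadj, -, hy⟩ := hxy
    have hc := c.valid hadj
    have hφ := φ.valid hadj
    -- a Kempe edge flips the side in `Fin 2` and, within `{i, j}`, the color
    split_ifs at ih ⊢ <;> grind

theorem exists_isKempeSwap_disagreement_ssubset (c : G.Coloring (Fin 2)) (e : Fin 2 ↪ Fin k)
    (φ : G.Coloring (Fin k)) {v : V} (hv : φ v ≠ e (c v)) :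
    ∃ ψ, IsKempeSwap G φ ψ ∧ {x | ψ x ≠ e (c x)} ⊂ {x | φ x ≠ e (c x)} := by
  set R := (kempeSubgraph G φ (φ v) (e (c v))).Reachable v
  have chain_disagrees : ∀ x, R x → φ x ≠ e (c x) := by
    intro x hx
    rw [kempeSubgraph_reachable_apply_eq_ite c φ rfl hx]
    split_ifs with hcx
    · rwa [hcx]
    · exact e.injective.ne (Ne.symm hcx)
  refine ⟨φ.kempeSwap (φ v) (e (c v)) v, isKempeSwap_kempeSwap _ _ _ _, ?_⟩
  have hsub : {x | φ.kempeSwap (φ v) (e (c v)) v x ≠ e (c x)} ⊆ {x | φ x ≠ e (c x)} := by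
    intro x hx
    by_cases hRx : R x
    · exact chain_disagrees x hRx
    · simpa [R, hRx] using hx
  refine (Set.ssubset_iff_of_subset hsub).mpr ⟨v, hv, ?_⟩
  simp

theorem kempeEquiv_recolorOfEmbedding [Finite V] (c : G.Coloring (Fin 2)) (e : Fin 2 ↪ Fin k)
    (φ : G.Coloring (Fin k)) : KempeEquiv G k φ (G.recolorOfEmbedding e c) := by
  induction φ using
    (wellFounded_lt.onFun (f := fun φ : G.Coloring (Fin k) => {x | φ x ≠ e (c x)})).induction with
  | _ φ ih =>
  by_cases h : ∀ x, φ x = e (c x)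
  · rw [DFunLike.ext φ (G.recolorOfEmbedding e c) h]
    exact .refl _
  · push Not at h
    obtain ⟨v, hv⟩ := h
    obtain ⟨ψ, hψ, hlt⟩ := exists_isKempeSwap_disagreement_ssubset c e φ hv
    exact .trans _ _ _ (.rel _ _ hψ) (ih ψ hlt)

end SimpleGraph

theorem Kc_eq_one_of_forall_kempeEquiv {V : Type*} {G : SimpleGraph V} {k : ℕ}
    {φ₀ : G.Coloring (Fin k)} (h : ∀ φ, KempeEquiv G k φ φ₀) : Kc G k = 1 := by
  have : Subsingleton (Quot (KempeEquiv G k)) := ⟨fun x y => Quot.induction_on₂ x y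
    fun φ ψ => Quot.sound (.trans _ _ _ (h φ) (.symm _ _ (h ψ)))⟩
  have : Nonempty (Quot (KempeEquiv G k)) := ⟨Quot.mk _ φ₀⟩
  exact Nat.card_unique

/-- If `G` is bipartite and `k ≥ 2`, then all `k`-colorings of `G` are Kempe
`k`-equivalent, i.e. `Kc(G,k) = 1`. -/
theorem stmt10 {V : Type*} [Fintype V] (G : SimpleGraph V) (hG : G.Colorable 2)
    (k : ℕ) (hk : 2 ≤ k) : Kc G k = 1 := by
  obtain ⟨c⟩ := hG
  exact Kc_eq_one_of_forall_kempeEquiv (kempeEquiv_recolorOfEmbedding c (Fin.castLEEmb hk))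
end

section
/- Let J be a graph and let J′ be the graph obtained from J by adding a new vertex v adjacent to every vertex of J. Then Kc(J, χ(J) + 1) = 1 if and only if Kc(J′, χ(J′) + 1) = 1, where χ denotes chromatic number. -/
/-!
Adding a dominating vertex raises the chromatic number by exactly one, so it suffices to show
`Kc J' (m + 1) = Kc J m` for every `m`. Extending a coloring of `J` by a fresh color on the new
vertex turns Kempe swaps into Kempe swaps. Conversely, renaming the color of the new vertex to the
fresh one and restricting to `J` respects Kempe swaps: a swap of colors `i, j` with the new vertex
colored `i` or `j` changes the coloring by a global permutation of colors, which is a product of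
Kempe swaps (a swap on all `i,j`-components at once is one), and any other swap avoids the new
vertex and restricts to a swap in `J`. The same renaming shows that every coloring of `J'` is
Kempe equivalent to an extension.
-/

open SimpleGraph

/-- The graph obtained from `J` by adding a new dominating vertex (`none`). -/
def addDominating {V : Type*} (J : SimpleGraph V) : SimpleGraph (Option V) where
  Adj u v := u ≠ v ∧ ∀ a b : V, u = some a → v = some b → J.Adj a b
  symm := by
    constructor
    rintro u v ⟨hne, h⟩
    exact ⟨hne.symm, fun a b ha hb => (h b a hb ha).symm⟩
  loopless := ⟨fun u h => h.1 rfl⟩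

section KempeSwaps

variable {V : Type*} {G : SimpleGraph V} {k : ℕ}

lemma Equiv.swap_apply_eq_or_eq_iff {α : Type*} [DecidableEq α] {i j x : α} :
    (Equiv.swap i j x = i ∨ Equiv.swap i j x = j) ↔ (x = i ∨ x = j) := by
  rw [Equiv.swap_apply_eq_iff, Equiv.swap_apply_eq_iff, Equiv.swap_apply_left,
    Equiv.swap_apply_right, or_comm]

lemma Equiv.swap_apply_of_not_eq_or_eq {α : Type*} [DecidableEq α] {i j x : α}
    (h : ¬(x = i ∨ x = j)) : Equiv.swap i j x = x :=
  Equiv.swap_apply_of_ne_of_ne (fun hi => h (Or.inl hi)) fun hj => h (Or.inr hj)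

open scoped Classical in
noncomputable def swapOn (φ : V → Fin k) (i j : Fin k) (S : Set V) (v : V) : Fin k :=
  if v ∈ S then Equiv.swap i j (φ v) else φ v

def IsKempeClosed (G : SimpleGraph V) (φ : V → Fin k) (i j : Fin k) (S : Set V) : Prop :=
  ∀ ⦃u v : V⦄, u ∈ S → (kempeSubgraph G φ i j).Adj u v → v ∈ S

variable {φ : V → Fin k} {i j : Fin k} {S : Set V} {v : V}

lemma swapOn_of_mem (h : v ∈ S) : swapOn φ i j S v = Equiv.swap i j (φ v) := if_pos h

lemma swapOn_of_notMem (h : v ∉ S) : swapOn φ i j S v = φ v := if_neg h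

lemma swapOn_of_not_eq_or_eq (h : ¬(φ v = i ∨ φ v = j)) : swapOn φ i j S v = φ v := by
  by_cases hv : v ∈ S
  · rw [swapOn_of_mem hv, Equiv.swap_apply_of_not_eq_or_eq h]
  · exact swapOn_of_notMem hv

lemma swapOn_eq_or_eq_iff :
    (swapOn φ i j S v = i ∨ swapOn φ i j S v = j) ↔ (φ v = i ∨ φ v = j) := by
  by_cases hv : v ∈ S
  · rw [swapOn_of_mem hv, Equiv.swap_apply_eq_or_eq_iff]
  · rw [swapOn_of_notMem hv]

lemma kempeSubgraph_swapOn : kempeSubgraph G (swapOn φ i j S) i j = kempeSubgraph G φ i j := by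
  ext u v
  exact and_congr_right fun _ => and_congr swapOn_eq_or_eq_iff swapOn_eq_or_eq_iff

lemma swapOn_adj_ne (c : G.Coloring (Fin k)) (hS : IsKempeClosed G c i j S) {u v : V}
    (huv : G.Adj u v) : swapOn c i j S u ≠ swapOn c i j S v := by
  have cross {u v : V} (huv : G.Adj u v) (hu : u ∈ S) (hv : v ∉ S) :
      Equiv.swap i j (c u) ≠ c v := by
    by_cases hcu : c u = i ∨ c u = j
    · intro h
      have hcv : c v = i ∨ c v = j := h ▸ Equiv.swap_apply_eq_or_eq_iff.mpr hcu
      exact hv (hS hu ⟨huv, hcu, hcv⟩)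
    · rw [Equiv.swap_apply_of_not_eq_or_eq hcu]
      exact c.valid huv
  by_cases hu : u ∈ S <;> by_cases hv : v ∈ S
  · rw [swapOn_of_mem hu, swapOn_of_mem hv]
    exact (Equiv.injective _).ne (c.valid huv)
  · rw [swapOn_of_mem hu, swapOn_of_notMem hv]
    exact cross huv hu hv
  · rw [swapOn_of_notMem hu, swapOn_of_mem hv]
    exact (cross huv.symm hv hu).symm
  · rw [swapOn_of_notMem hu, swapOn_of_notMem hv]
    exact c.valid huv

lemma IsKempeClosed.mem_of_reachable (hS : IsKempeClosed G φ i j S) {u v : V} (hu : u ∈ S)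
    (huv : (kempeSubgraph G φ i j).Reachable u v) : v ∈ S := by
  obtain ⟨p⟩ := huv
  induction p with
  | nil => exact hu
  | cons huw _ ih => exact ih (hS hu huw)

lemma IsKempeSwap.exists_swapOn {c d : G.Coloring (Fin k)} (h : IsKempeSwap G c d) :
    ∃ (i j : Fin k) (S : Set V), IsKempeClosed G c i j S ∧ ∀ v, d v = swapOn c i j S v := by
  obtain ⟨i, j, w, hw⟩ := h
  set C := {v | (kempeSubgraph G c i j).Reachable w v}
  refine ⟨i, j, C, fun u v hu huv => hu.trans huv.reachable, fun v => ?_⟩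
  by_cases hv : v ∈ C
  · exact ((hw v).1 hv).trans (swapOn_of_mem hv).symm
  · exact ((hw v).2 hv).trans (swapOn_of_notMem hv).symm

/-- Swap on one Kempe component of `S` at a time, inducting on the number of `i,j`-colored
vertices of `S`. -/
theorem KempeEquiv.of_swapOn [Finite V] {c d : G.Coloring (Fin k)}
    (hS : IsKempeClosed G c i j S) (hd : ∀ v, d v = swapOn c i j S v) : KempeEquiv G k c d := by
  obtain ⟨N, hN⟩ : ∃ N, (S ∩ {v | c v = i ∨ c v = j}).ncard ≤ N := ⟨_, le_rfl⟩
  induction N generalizing c S with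
  | zero =>
    have hempty : ∀ v ∈ S, ¬(c v = i ∨ c v = j) := fun v hv hc =>
      (Set.ncard_eq_zero (Set.toFinite _)).mp (Nat.le_zero.mp hN) |>.subset ⟨hv, hc⟩
    have : d = c := by
      ext v
      rw [hd v]
      by_cases hv : v ∈ S
      · exact congrArg _ (swapOn_of_not_eq_or_eq (hempty v hv))
      · exact congrArg _ (swapOn_of_notMem hv)
    exact this ▸ Relation.EqvGen.refl c
  | succ N ih =>
    by_cases hempty : S ∩ {v | c v = i ∨ c v = j} = ∅
    · exact ih hS hd (by rw [hempty, Set.ncard_empty]; exact N.zero_le)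
    obtain ⟨w, hwS, hwc⟩ := Set.nonempty_iff_ne_empty.mpr hempty
    set C : Set V := {v | (kempeSubgraph G c i j).Reachable w v}
    have hC : IsKempeClosed G c i j C := fun u v hu huv => hu.trans huv.reachable
    let c₁ : G.Coloring (Fin k) := Coloring.mk (swapOn c i j C) (swapOn_adj_ne c hC)
    have hswap : IsKempeSwap G c c₁ := ⟨i, j, w, fun v =>
      ⟨fun hv => swapOn_of_mem hv, fun hv => swapOn_of_notMem hv⟩⟩
    have hrest : IsKempeClosed G c₁ i j (S \ C) := by
      intro u v ⟨huS, huC⟩ huv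
      rw [show (c₁ : V → Fin k) = swapOn c i j C from rfl, kempeSubgraph_swapOn] at huv
      exact ⟨hS huS huv, fun hvC => huC (hvC.trans huv.symm.reachable)⟩
    have hd₁ : ∀ v, d v = swapOn c₁ i j (S \ C) v := by
      intro v
      rw [hd v]
      change _ = swapOn (swapOn c i j C) i j (S \ C) v
      by_cases hvC : v ∈ C
      · rw [swapOn_of_mem (hS.mem_of_reachable hwS hvC), swapOn_of_notMem fun h => h.2 hvC,
          swapOn_of_mem hvC]
      by_cases hvS : v ∈ S
      · rw [swapOn_of_mem hvS, swapOn_of_mem (show v ∈ S \ C from ⟨hvS, hvC⟩),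
          swapOn_of_notMem hvC]
      · rw [swapOn_of_notMem hvS, swapOn_of_notMem fun h => hvS h.1, swapOn_of_notMem hvC]
    refine Relation.EqvGen.trans _ _ _ (Relation.EqvGen.rel _ _ hswap) (ih hrest hd₁ ?_)
    have hcolored : {v | c₁ v = i ∨ c₁ v = j} = {v | c v = i ∨ c v = j} :=
      Set.ext fun v => swapOn_eq_or_eq_iff
    rw [hcolored]
    set P := S ∩ {v | c v = i ∨ c v = j}
    have hsub : (S \ C) ∩ {v | c v = i ∨ c v = j} ⊆ P \ {w} :=
      fun v ⟨⟨hvS, hvC⟩, hvc⟩ => ⟨⟨hvS, hvc⟩, fun hvw => hvC (hvw ▸ Reachable.refl w)⟩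
    have hlt := Set.ncard_sdiff_singleton_lt_of_mem (s := P) ⟨hwS, hwc⟩
    have := Set.ncard_le_ncard hsub
    omega

theorem KempeEquiv.of_perm [Finite V] {c d : G.Coloring (Fin k)} (σ : Equiv.Perm (Fin k))
    (hd : ∀ v, d v = σ (c v)) : KempeEquiv G k c d := by
  induction σ using Equiv.Perm.swap_induction_on generalizing d with
  | one =>
    have : d = c := by
      ext v
      exact congrArg _ (hd v)
    exact this ▸ Relation.EqvGen.refl c
  | swap_mul σ x y _ ih =>
    refine Relation.EqvGen.trans _ (G.recolorOfEquiv σ c) _ (ih fun v => rfl)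
      (KempeEquiv.of_swapOn (i := x) (j := y) (S := Set.univ) (fun _ _ _ _ => trivial) fun v => ?_)
    rw [hd v, swapOn_of_mem (Set.mem_univ v)]
    rfl

lemma KempeEquiv.map {W : Type*} {H : SimpleGraph W} {l : ℕ}
    (f : G.Coloring (Fin k) → H.Coloring (Fin l))
    (hf : ∀ c d, IsKempeSwap G c d → KempeEquiv H l (f c) (f d)) {c d : G.Coloring (Fin k)}
    (h : KempeEquiv G k c d) : KempeEquiv H l (f c) (f d) := by
  induction h with
  | rel c d h => exact hf c d h
  | refl c => exact Relation.EqvGen.refl _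
  | symm c d _ ih => exact Relation.EqvGen.symm _ _ ih
  | trans c d e _ _ ih₁ ih₂ => exact Relation.EqvGen.trans _ _ _ ih₁ ih₂

end KempeSwaps

section AddDominating

variable {V : Type*} {J : SimpleGraph V} {m : ℕ}

lemma addDominating_adj_some_some {a b : V} :
    (addDominating J).Adj (some a) (some b) ↔ J.Adj a b :=
  ⟨fun h => h.2 a b rfl rfl, fun h =>
    ⟨fun hab => J.irrefl (Option.some_injective _ hab ▸ h),
      by rintro _ _ ⟨⟩ ⟨⟩; exact h⟩⟩

lemma addDominating_adj_none_some (a : V) : (addDominating J).Adj none (some a) :=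
  ⟨Option.some_ne_none a ∘ Eq.symm, by rintro _ _ ⟨⟩⟩

def extColoring (φ : J.Coloring (Fin m)) : (addDominating J).Coloring (Fin (m + 1)) :=
  Coloring.mk (fun v => v.elim (Fin.last m) fun a => (φ a).castSucc) <| by
    rintro (_ | a) (_ | b) hab
    · exact absurd rfl hab.1
    · exact (Fin.castSucc_ne_last (φ b)).symm
    · exact Fin.castSucc_ne_last (φ a)
    · exact Fin.castSucc_injective m |>.ne (φ.valid (addDominating_adj_some_some.mp hab))

@[simp] lemma extColoring_none (φ : J.Coloring (Fin m)) : extColoring φ none = Fin.last m := rfl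

@[simp] lemma extColoring_some (φ : J.Coloring (Fin m)) (a : V) :
    extColoring φ (some a) = (φ a).castSucc := rfl

lemma swap_last_apply_ne_last {c x : Fin (m + 1)} (hx : x ≠ c) :
    Equiv.swap c (Fin.last m) x ≠ Fin.last m := by
  rwa [Ne, Equiv.swap_apply_eq_iff, Equiv.swap_apply_right]

/-- Rename colors so that the dominating vertex has color `Fin.last m`, then restrict to `J`. -/
def resColoring (α : (addDominating J).Coloring (Fin (m + 1))) : J.Coloring (Fin m) :=
  Coloring.mk
    (fun a => (Equiv.swap (α none) (Fin.last m) (α (some a))).castPred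
      (swap_last_apply_ne_last (α.valid (addDominating_adj_none_some a)).symm))
    fun hab h => α.valid (addDominating_adj_some_some.mpr hab)
      (Equiv.injective _ (Fin.castPred_inj.mp h))

lemma castSucc_resColoring (α : (addDominating J).Coloring (Fin (m + 1))) (a : V) :
    (resColoring α a).castSucc = Equiv.swap (α none) (Fin.last m) (α (some a)) :=
  Fin.ext rfl

lemma resColoring_extColoring (φ : J.Coloring (Fin m)) : resColoring (extColoring φ) = φ := by
  refine DFunLike.ext _ _ fun a => Fin.castSucc_injective m ?_
  rw [castSucc_resColoring, extColoring_none, Equiv.swap_self, extColoring_some]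
  rfl

lemma kempeEquiv_extColoring_resColoring [Finite V]
    (α : (addDominating J).Coloring (Fin (m + 1))) :
    KempeEquiv (addDominating J) (m + 1) α (extColoring (resColoring α)) := by
  refine KempeEquiv.of_perm (Equiv.swap (α none) (Fin.last m)) ?_
  rintro (_ | a)
  · rw [extColoring_none, Equiv.swap_apply_left]
  · rw [extColoring_some, castSucc_resColoring]

lemma KempeEquiv.map_extColoring [Finite V] {φ ψ : J.Coloring (Fin m)}
    (h : KempeEquiv J m φ ψ) :
    KempeEquiv (addDominating J) (m + 1) (extColoring φ) (extColoring ψ) := by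
  refine h.map extColoring fun φ ψ hswap => ?_
  obtain ⟨i, j, S, hS, hψ⟩ := hswap.exists_swapOn
  refine KempeEquiv.of_swapOn (i := i.castSucc) (j := j.castSucc) (S := some '' S) ?_ ?_
  · rintro _ (_ | b) ⟨a, ha, rfl⟩ ⟨hab, hca, hcb⟩
    · exact (hcb.elim (Fin.castSucc_ne_last i).symm (Fin.castSucc_ne_last j).symm).elim
    · simp only [extColoring_some, Fin.castSucc_inj] at hca hcb
      exact Set.mem_image_of_mem _ (hS ha ⟨addDominating_adj_some_some.mp hab, hca, hcb⟩)
  · rintro (_ | a)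
    · rw [swapOn_of_notMem (by simp)]
      rfl
    · by_cases ha : a ∈ S
      · rw [swapOn_of_mem (Set.mem_image_of_mem _ ha), extColoring_some, extColoring_some, hψ,
          swapOn_of_mem ha, (Fin.castSucc_injective m).swap_apply]
      · rw [swapOn_of_notMem (by simpa using ha), extColoring_some, extColoring_some, hψ,
          swapOn_of_notMem ha]

lemma resColoring_kempeEquiv_of_perm [Finite V] {α β : (addDominating J).Coloring (Fin (m + 1))}
    (τ : Equiv.Perm (Fin (m + 1))) (hβ : ∀ v, β v = τ (α v)) :
    KempeEquiv J m (resColoring α) (resColoring β) := by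
  set ρ := Equiv.swap (β none) (Fin.last m) * τ * Equiv.swap (α none) (Fin.last m)
  have hρ : ρ (Fin.last m) = Fin.last m := by
    simp [ρ, ← hβ none]
  have hρ_ne (x : Fin m) : ρ x.castSucc ≠ Fin.last m :=
    fun h => Fin.castSucc_ne_last x (ρ.injective (h.trans hρ.symm))
  let f (x : Fin m) : Fin m := (ρ x.castSucc).castPred (hρ_ne x)
  have hf : Function.Injective f := fun x y h =>
    Fin.castSucc_injective m (ρ.injective (Fin.castPred_inj.mp h))
  refine KempeEquiv.of_perm (Equiv.ofBijective f hf.bijective_of_finite) fun a => ?_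
  apply Fin.castSucc_injective m
  rw [castSucc_resColoring, Equiv.ofBijective_apply, Fin.castSucc_castPred, castSucc_resColoring]
  simp [ρ, hβ]

lemma resColoring_kempeEquiv_of_swapOn [Finite V]
    {α β : (addDominating J).Coloring (Fin (m + 1))} {i j : Fin (m + 1)} {S : Set (Option V)}
    (hnone : ¬(α none = i ∨ α none = j)) (hS : IsKempeClosed (addDominating J) α i j S)
    (hβ : ∀ v, β v = swapOn α i j S v) :
    KempeEquiv J m (resColoring α) (resColoring β) := by
  have hres (a : V) (x : Fin (m + 1)) (hx) :
      resColoring α a = (Equiv.swap (α none) (Fin.last m) x).castPred hx ↔ α (some a) = x := by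
    rw [← (Fin.castSucc_injective m).eq_iff, Fin.castSucc_castPred, castSucc_resColoring,
      (Equiv.injective _).eq_iff]
  have hi := swap_last_apply_ne_last fun h => hnone (Or.inl h.symm)
  have hj := swap_last_apply_ne_last fun h => hnone (Or.inr h.symm)
  refine KempeEquiv.of_swapOn (i := Fin.castPred _ hi) (j := Fin.castPred _ hj)
    (S := some ⁻¹' S) (fun a b ha ⟨hab, hca, hcb⟩ => ?_) fun a => ?_
  · rw [hres, hres] at hca hcb
    exact hS ha ⟨addDominating_adj_some_some.mpr hab, hca, hcb⟩
  apply Fin.castSucc_injective m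
  rw [castSucc_resColoring, hβ, hβ, swapOn_of_not_eq_or_eq hnone]
  by_cases ha : some a ∈ S
  · rw [swapOn_of_mem ha, swapOn_of_mem (show a ∈ some ⁻¹' S from ha),
      ← (Fin.castSucc_injective m).swap_apply, Fin.castSucc_castPred, Fin.castSucc_castPred,
      castSucc_resColoring, (Equiv.injective _).swap_apply]
  · rw [swapOn_of_notMem ha, swapOn_of_notMem (show a ∉ some ⁻¹' S from ha),
      castSucc_resColoring]

lemma exists_perm_of_swapOn_of_none_colored
    {α β : (addDominating J).Coloring (Fin (m + 1))} {i j : Fin (m + 1)} {S : Set (Option V)}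
    (hnone : α none = i ∨ α none = j) (hS : IsKempeClosed (addDominating J) α i j S)
    (hβ : ∀ v, β v = swapOn α i j S v) :
    ∃ τ : Equiv.Perm (Fin (m + 1)), ∀ v, β v = τ (α v) := by
  -- `none` is Kempe-adjacent to every `i,j`-colored vertex, so `S` contains all of them or none.
  have hpair (a : V) (ha : α (some a) = i ∨ α (some a) = j) : some a ∈ S ↔ none ∈ S :=
    ⟨fun h => hS h ⟨(addDominating_adj_none_some a).symm, ha, hnone⟩,
      fun h => hS h ⟨addDominating_adj_none_some a, hnone, ha⟩⟩
  by_cases hnS : none ∈ S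
  · refine ⟨Equiv.swap i j, fun v => (hβ v).trans ?_⟩
    by_cases hv : v ∈ S
    · exact swapOn_of_mem hv
    rcases v with _ | a
    · exact absurd hnS hv
    · have ha : ¬(α (some a) = i ∨ α (some a) = j) := fun ha => hv ((hpair a ha).mpr hnS)
      rw [swapOn_of_notMem hv, Equiv.swap_apply_of_not_eq_or_eq ha]
  · refine ⟨1, fun v => (hβ v).trans ?_⟩
    by_cases hv : v ∈ S
    · rcases v with _ | a
      · exact absurd hv hnS
      · exact swapOn_of_not_eq_or_eq fun ha => hnS ((hpair a ha).mp hv)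
    · exact swapOn_of_notMem hv

lemma KempeEquiv.map_resColoring [Finite V] {α β : (addDominating J).Coloring (Fin (m + 1))}
    (h : KempeEquiv (addDominating J) (m + 1) α β) :
    KempeEquiv J m (resColoring α) (resColoring β) := by
  refine h.map resColoring fun α β hswap => ?_
  obtain ⟨i, j, S, hS, hβ⟩ := hswap.exists_swapOn
  by_cases hnone : α none = i ∨ α none = j
  · obtain ⟨τ, hτ⟩ := exists_perm_of_swapOn_of_none_colored hnone hS hβ
    exact resColoring_kempeEquiv_of_perm τ hτ
  · exact resColoring_kempeEquiv_of_swapOn hnone hS hβ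

variable (J m) in
noncomputable def kempeClassesEquivAddDominating [Finite V] :
    Quot (KempeEquiv J m) ≃ Quot (KempeEquiv (addDominating J) (m + 1)) where
  toFun := Quot.map extColoring fun _ _ => KempeEquiv.map_extColoring
  invFun := Quot.map resColoring fun _ _ => KempeEquiv.map_resColoring
  left_inv := Quot.ind fun φ => congrArg (Quot.mk _) (resColoring_extColoring φ)
  right_inv := Quot.ind fun α => (Quot.sound (kempeEquiv_extColoring_resColoring α)).symm

variable (J m) in
theorem Kc_addDominating [Finite V] : Kc (addDominating J) (m + 1) = Kc J m :=
  (Nat.card_congr (kempeClassesEquivAddDominating J m)).symm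

lemma colorable_addDominating_succ_iff : (addDominating J).Colorable (m + 1) ↔ J.Colorable m :=
  ⟨fun ⟨α⟩ => ⟨resColoring α⟩, fun ⟨φ⟩ => ⟨extColoring φ⟩⟩

lemma chromaticNumber_addDominating {n : ℕ} (hn : J.chromaticNumber = n) :
    (addDominating J).chromaticNumber = n + 1 := by
  rw [chromaticNumber_eq_iff_colorable_not_colorable, colorable_addDominating_succ_iff]
  refine ⟨chromaticNumber_le_iff_colorable.mp hn.le, ?_⟩
  cases n with
  | zero => exact fun ⟨α⟩ => (α none).elim0
  | succ n =>
    rw [colorable_addDominating_succ_iff]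
    exact (chromaticNumber_eq_iff_colorable_not_colorable.mp (by exact_mod_cast hn)).2

end AddDominating

/-- `Kc(J, χ(J)+1) = 1` iff `Kc(J', χ(J')+1) = 1`, where `J'` is obtained from `J`
by adding a dominating vertex. -/
theorem stmt12 {V : Type*} [Fintype V] (J : SimpleGraph V) (n n' : ℕ)
    (hn : J.chromaticNumber = n) (hn' : (addDominating J).chromaticNumber = n') :
    Kc J (n + 1) = 1 ↔ Kc (addDominating J) (n' + 1) = 1 := by
  have hn'_eq : n' = n + 1 := by
    exact_mod_cast hn'.symm.trans (chromaticNumber_addDominating hn)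
  rw [hn'_eq, Kc_addDominating]
end
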